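/- Let F be a real closed field, ≤ its unique ordering, and v a non-trivial ≤-convex valuation on F. Then the residue field Fv, equipped with the ordering induced by ≤, is real closed, the value group vF is divisible, and (F, v) is henselian. -/

import Mathlib

/-- A linearly ordered field is real closed. -/
def IsRealClosedLOF (R : Type*) [Field R] [LinearOrder R] [IsStrictOrderedRing R] : Prop :=
  (∀ x : R, 0 ≤ x → ∃ y : R, y ^ 2 = x) ∧
    ∀ p : Polynomial R, Odd p.natDegree → ∃ x : R, p.eval x = 0

/-- `P` is the positive cone of a field ordering on `K`. -/
structure IsOrderingCone (K : Type*) [Field K] (P : Set K) : Prop where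
  add_mem : ∀ x ∈ P, ∀ y ∈ P, x + y ∈ P
  mul_mem : ∀ x ∈ P, ∀ y ∈ P, x * y ∈ P
  sq_mem : ∀ x : K, x ^ 2 ∈ P
  neg_one_not_mem : (-1 : K) ∉ P
  total : ∀ x : K, x ∈ P ∨ -x ∈ P

/-- `(K, P)` is a real closed ordered field. -/
def IsRealClosedCone (K : Type*) [Field K] (P : Set K) : Prop :=
  IsOrderingCone K P ∧ (∀ a ∈ P, ∃ b : K, b ^ 2 = a) ∧
    ∀ p : Polynomial K, Odd p.natDegree → ∃ x : K, p.eval x = 0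

/-- The ordering induced on the residue field of a convex valuation. -/
def residueCone (F : Type*) [Field F] [LinearOrder F] [IsStrictOrderedRing F] {Γ₀ : Type*}
    [LinearOrderedCommGroupWithZero Γ₀] (v : Valuation F Γ₀) :
    Set (IsLocalRing.ResidueField v.valuationSubring) :=
  {a | ∃ x : v.valuationSubring, 0 ≤ (x : F) ∧ IsLocalRing.residue v.valuationSubring x = a}

/-!
Over a real closed field `R` every irreducible polynomial has degree at most 2: a Galois extension
of `R` containing `√-1` is a 2-extension by the Sylow argument (`R` has no proper odd-degree
extensions), and `R(√-1)` has no quadratic extension because all its elements are squares.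
Hence polynomials over `R` satisfy the intermediate value theorem.

Convexity of the valuation ring means that `|x| ≤ |y|` implies `v x ≤ v y`, so `v (x - y) < v y`
forces `x` and `y` to have the same sign. For Hensel's lemma at `a` pick `s > 0` with
`s ^ 2 = |f a|`: by Taylor expansion `f (a ± s)` has the sign of `± f' a * s`, and the intermediate
value theorem gives a root within `s` of `a`. The residue field inherits square roots from `F`,
and roots of odd-degree polynomials because roots of monic lifts lie in the integrally closed
valuation ring; the value group is divisible since `|x|` has `n`-th roots.
-/

open Polynomial Module IntermediateField IsLocalRing

theorem Polynomial.eval_eq_of_natDegree_le_two {K : Type*} [CommRing K] {p : K[X]}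
    (hp : p.natDegree ≤ 2) (x : K) :
    p.eval x = p.coeff 2 * (x * x) + p.coeff 1 * x + p.coeff 0 := by
  rw [eval_eq_sum_range' (n := 3) (by omega)]
  simp only [Finset.sum_range_succ, Finset.sum_range_zero]
  ring

theorem Polynomial.exists_isRoot_of_isSquare_discrim {K : Type*} [Field K] [NeZero (2 : K)]
    {p : K[X]} (hp : p.natDegree = 2)
    (hd : IsSquare (discrim (p.coeff 2) (p.coeff 1) (p.coeff 0))) : ∃ x, p.IsRoot x := by
  have ha : p.coeff 2 ≠ 0 := by
    rw [← hp]; exact leadingCoeff_ne_zero.mpr (ne_zero_of_natDegree_gt (n := 0) (by omega))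
  obtain ⟨x, hx⟩ := exists_quadratic_eq_zero ha hd
  exact ⟨x, by rw [IsRoot.def, eval_eq_of_natDegree_le_two hp.le, hx]⟩

theorem mul_pos_of_discrim_neg {K : Type*} [Field K] [LinearOrder K] [IsStrictOrderedRing K]
    {a b c : K} (h : discrim a b c < 0) (x y : K) :
    0 < (a * (x * x) + b * x + c) * (a * (y * y) + b * y + c) := by
  rw [discrim] at h
  have hx : 0 < 4 * a * (a * (x * x) + b * x + c) := by nlinarith [sq_nonneg (2 * a * x + b)]
  have hy : 0 < 4 * a * (a * (y * y) + b * y + c) := by nlinarith [sq_nonneg (2 * a * y + b)]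
  refine pos_of_mul_pos_right (a := (4 * a) * (4 * a)) ?_ (mul_self_nonneg _)
  linarith [mul_pos hx hy]

theorem Module.finrank_eq_one_of_forall_exists_isRoot {K E : Type*} [Field K] [Field E]
    [Algebra K E] [FiniteDimensional K E] [Algebra.IsSeparable K E]
    (h : ∀ p : K[X], p.natDegree = finrank K E → ∃ x, p.IsRoot x) : finrank K E = 1 := by
  obtain ⟨α, hα⟩ := Field.exists_primitive_element K E
  have hdeg := (Field.primitive_element_iff_minpoly_natDegree_eq K α).mp hα
  obtain ⟨x, hx⟩ := h _ hdeg
  rw [← hdeg]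
  exact natDegree_eq_of_degree_eq_some
    (degree_eq_one_of_irreducible_of_root (minpoly.irreducible (IsIntegral.of_finite K α)) hx)

theorem Module.finrank_ne_two_of_forall_isSquare {K E : Type*} [Field K] [NeZero (2 : K)]
    (hsq : ∀ x : K, IsSquare x) [Field E] [Algebra K E] [FiniteDimensional K E]
    [Algebra.IsSeparable K E] : finrank K E ≠ 2 := fun h2 => by
  have := finrank_eq_one_of_forall_exists_isRoot (K := K) (E := E)
    fun p hp => exists_isRoot_of_isSquare_discrim (hp.trans h2) (hsq _)
  omega

theorem IsGalois.exists_finrank_eq_two_pow {K L : Type*} [Field K] [Field L] [Algebra K L]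
    [FiniteDimensional K L] [IsGalois K L]
    (hK : ∀ p : K[X], Odd p.natDegree → ∃ x, p.IsRoot x) : ∃ k, finrank K L = 2 ^ k := by
  have : Fact (Nat.Prime 2) := ⟨Nat.prime_two⟩
  obtain ⟨P⟩ := Sylow.nonempty (p := 2) (G := Gal(L/K))
  have hP : finrank K (fixedField (P : Subgroup Gal(L/K))) = (P : Subgroup Gal(L/K)).index := by
    rw [finrank_eq_fixingSubgroup_index, IntermediateField.fixingSubgroup_fixedField]
  have hodd : Odd (finrank K (fixedField (P : Subgroup Gal(L/K)))) := by
    rw [hP, Nat.odd_iff]; have := P.not_dvd_index; omega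
  have hone := finrank_eq_one_of_forall_exists_isRoot fun p hp => hK p (hp ▸ hodd)
  obtain ⟨k, hk⟩ := IsPGroup.iff_card.mp P.isPGroup'
  refine ⟨k, ?_⟩
  rw [← IsGalois.card_aut_eq_finrank, ← Subgroup.index_mul_card (P : Subgroup Gal(L/K)), ← hP,
    hone, one_mul, hk]

theorem IsGalois.exists_intermediateField_finrank_eq_two {K L : Type*} [Field K] [Field L]
    [Algebra K L] [FiniteDimensional K L] [IsGalois K L] {m : ℕ}
    (hm : finrank K L = 2 ^ (m + 1)) : ∃ E : IntermediateField K L, finrank K E = 2 := by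
  have : Fact (Nat.Prime 2) := ⟨Nat.prime_two⟩
  obtain ⟨H, hH⟩ := Sylow.exists_subgroup_card_pow_prime 2 (n := m) (G := Gal(L/K))
    (by rw [IsGalois.card_aut_eq_finrank, hm]; exact pow_dvd_pow 2 m.le_succ)
  refine ⟨fixedField H, ?_⟩
  have h := finrank_mul_finrank K (fixedField H) L
  rw [finrank_fixedField_eq_card, hH, hm, pow_succ'] at h
  exact Nat.eq_of_mul_eq_mul_right (by positivity) h

theorem IntermediateField.exists_eq_algebraMap_add_algebraMap_mul {K L : Type*} [Field K]
    [Field L] [Algebra K L] {i : L} (hi : i ^ 2 = -1) {w : L} (hw : w ∈ K⟮i⟯) :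
    ∃ a b : K, w = algebraMap K L a + algebraMap K L b * i := by
  have hmonic : (X ^ 2 + 1 : K[X]).Monic := by monicity!
  have hroot : aeval i (X ^ 2 + 1 : K[X]) = 0 := by simp [hi]
  rw [← mem_toSubalgebra, adjoin_simple_toSubalgebra_of_isAlgebraic
      (IsIntegral.isAlgebraic ⟨_, hmonic, hroot⟩), Algebra.adjoin_singleton_eq_range_aeval] at hw
  obtain ⟨p, rfl⟩ := hw
  have hdeg : (p %ₘ (X ^ 2 + 1)).natDegree ≤ 1 := by
    have h2 : (X ^ 2 + 1 : K[X]).natDegree = 2 := by compute_degree!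
    have := natDegree_modByMonic_lt p hmonic (fun h => by simp [h] at h2)
    omega
  obtain ⟨b, a, hab⟩ := exists_eq_X_add_C_of_natDegree_le_one hdeg
  refine ⟨a, b, ?_⟩
  rw [AlgHom.toRingHom_eq_coe, RingHom.coe_coe, ← aeval_modByMonic_eq_self_of_root hroot, hab]
  simp [add_comm]

theorem Valuation.map_abs {R Γ₀ : Type*} [Ring R] [LinearOrder R]
    [LinearOrderedCommGroupWithZero Γ₀] (v : Valuation R Γ₀) (x : R) : v |x| = v x := by
  rcases abs_choice x with h | h <;> simp [h]

namespace IsRealClosed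

variable {R : Type*} [Field R] [LinearOrder R] [IsStrictOrderedRing R] [IsRealClosed R]

theorem exists_sq_sub_sq_eq_and_two_mul_eq (a b : R) :
    ∃ c d : R, c ^ 2 - d ^ 2 = a ∧ 2 * c * d = b := by
  obtain ⟨r, hr⟩ := exists_eq_pow_of_nonneg (by positivity : 0 ≤ a ^ 2 + b ^ 2) two_ne_zero
  rw [← sq_abs r] at hr
  have hra : |a| ≤ |r| := sq_le_sq.mp (by linarith [sq_nonneg b, sq_abs r])
  obtain ⟨c, hc⟩ := exists_eq_pow_of_nonneg (by linarith [neg_abs_le a] : 0 ≤ (|r| + a) / 2)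
    two_ne_zero
  obtain ⟨d, hd⟩ := exists_eq_pow_of_nonneg (by linarith [le_abs_self a] : 0 ≤ (|r| - a) / 2)
    two_ne_zero
  have hcd : (2 * c * d) ^ 2 = b ^ 2 := by
    linear_combination (-4 * c ^ 2) * hd + (-2 * (|r| - a)) * hc - hr
  rcases sq_eq_sq_iff_eq_or_eq_neg.mp hcd with h | h
  · exact ⟨c, d, by linear_combination hd - hc, h⟩
  · exact ⟨c, -d, by linear_combination hd - hc, by linear_combination -h⟩

theorem isSquare_of_mem_adjoin {L : Type*} [Field L] [Algebra R L] {i : L}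
    (hi : i ^ 2 = -1) (w : R⟮i⟯) : IsSquare w := by
  obtain ⟨a, b, hab⟩ := exists_eq_algebraMap_add_algebraMap_mul hi w.2
  obtain ⟨c, d, rfl, rfl⟩ := exists_sq_sub_sq_eq_and_two_mul_eq a b
  refine ⟨⟨algebraMap R L c + algebraMap R L d * i,
    add_mem (IntermediateField.algebraMap_mem _ c)
      (mul_mem (IntermediateField.algebraMap_mem _ d) (mem_adjoin_simple_self R i))⟩,
    Subtype.ext ?_⟩
  simp only [MulMemClass.coe_mul, hab, map_sub, map_pow, map_mul, map_ofNat]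
  linear_combination (-(algebraMap R L d) ^ 2) * hi

theorem finrank_le_two_of_isGalois {L : Type*} [Field L] [Algebra R L]
    [FiniteDimensional R L] [IsGalois R L] {i : L} (hi : i ^ 2 = -1) : finrank R L ≤ 2 := by
  have hK : finrank R R⟮i⟯ ≤ 2 := by
    rw [adjoin.finrank ⟨X ^ 2 + 1, by monicity!, by simp [hi]⟩]
    calc (minpoly R i).natDegree ≤ (X ^ 2 + 1 : R[X]).natDegree :=
          natDegree_le_of_dvd (minpoly.dvd R i (by simp [hi]))
            (monic_X_pow_add_C 1 two_ne_zero).ne_zero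
      _ = 2 := by compute_degree!
  have hKL : finrank R⟮i⟯ L = 1 := by
    obtain ⟨k, hk⟩ := IsGalois.exists_finrank_eq_two_pow (K := R) (L := L)
      fun p hp => exists_isRoot_of_odd_natDegree hp
    have hdvd : finrank R⟮i⟯ L ∣ 2 ^ k := hk ▸ Dvd.intro_left _ (finrank_mul_finrank R R⟮i⟯ L)
    obtain ⟨_ | m, -, hm⟩ := (Nat.dvd_prime_pow Nat.prime_two).mp hdvd
    · exact hm
    · obtain ⟨E, hE⟩ := IsGalois.exists_intermediateField_finrank_eq_two hm
      exact absurd hE (finrank_ne_two_of_forall_isSquare (isSquare_of_mem_adjoin hi))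
  rw [← finrank_mul_finrank R R⟮i⟯ L, hKL, mul_one]
  exact hK

theorem natDegree_le_two_of_irreducible {q : R[X]} (hq : Irreducible q) : q.natDegree ≤ 2 := by
  set p := q * (X ^ 2 + 1)
  have hp : p ≠ 0 := mul_ne_zero hq.ne_zero (monic_X_pow_add_C 1 two_ne_zero).ne_zero
  have : IsGalois R p.SplittingField := ⟨⟩
  have hroot : ∀ g : R[X], g ∣ p → 0 < g.natDegree → ∃ x : p.SplittingField, aeval x g = 0 :=
    fun g hg hg0 => by
      obtain ⟨x, hx⟩ := ((SplittingField.splits p).of_dvd (map_ne_zero hp) (map_dvd _ hg))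
        |>.exists_eval_eq_zero (by
          rw [degree_map, degree_eq_natDegree (ne_zero_of_natDegree_gt hg0)]
          exact_mod_cast hg0.ne')
      exact ⟨x, by rwa [aeval_def, ← eval_map]⟩
  obtain ⟨i, hi⟩ := hroot (X ^ 2 + 1) (dvd_mul_left _ _) (by
    rw [show (X ^ 2 + 1 : R[X]).natDegree = 2 by compute_degree!]; norm_num)
  obtain ⟨z, hz⟩ := hroot q (dvd_mul_right _ _) hq.natDegree_pos
  rw [← natDegree_mul_C (inv_ne_zero (leadingCoeff_ne_zero.mpr hq.ne_zero)),
    minpoly.eq_of_irreducible hq hz]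
  exact (minpoly.natDegree_le z).trans
    (finrank_le_two_of_isGalois (by simpa [add_eq_zero_iff_eq_neg] using hi))

theorem eval_mul_eval_pos_of_irreducible {q : R[X]} (hq : Irreducible q)
    (hroot : ∀ x, ¬ q.IsRoot x) (a b : R) : 0 < q.eval a * q.eval b := by
  have hq2 : q.natDegree ≤ 2 := natDegree_le_two_of_irreducible hq
  have hdisc : discrim (q.coeff 2) (q.coeff 1) (q.coeff 0) < 0 := by
    by_contra! hd
    have hq1 : q.natDegree ≠ 1 := fun h1 => (exists_root_of_degree_eq_one
      (degree_eq_iff_natDegree_eq_of_pos one_pos |>.mpr h1)).elim hroot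
    obtain ⟨x, hx⟩ := exists_isRoot_of_isSquare_discrim (by have := hq.natDegree_pos; omega)
      (nonneg_iff_isSquare.mp hd)
    exact hroot x hx
  rw [eval_eq_of_natDegree_le_two hq2, eval_eq_of_natDegree_le_two hq2]
  exact mul_pos_of_discrim_neg hdisc a b

theorem exists_isRoot_of_eval_mul_eval_neg {f : R[X]} {a b : R} (hab : a ≤ b)
    (hf : f.eval a * f.eval b < 0) : ∃ x ∈ Set.Icc a b, f.IsRoot x := by
  induction hn : f.natDegree using Nat.strong_induction_on generalizing f with
  | _ n ih =>
  have hf0 : f ≠ 0 := by rintro rfl; simp at hf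
  have descend : ∀ q t, f = q * t → 0 < q.natDegree → 0 < q.eval a * q.eval b →
      ∃ x ∈ Set.Icc a b, f.IsRoot x := by
    rintro q t rfl hq hpos
    have ht0 : t ≠ 0 := right_ne_zero_of_mul hf0
    rw [eval_mul, eval_mul] at hf
    obtain ⟨x, hx, hxt⟩ := ih t.natDegree
      (by rw [← hn, natDegree_mul (left_ne_zero_of_mul hf0) ht0]; omega)
      (f := t) (by nlinarith) rfl
    exact ⟨x, hx, by simp [hxt.eq_zero]⟩
  by_cases hroot : ∃ r, f.IsRoot r
  · obtain ⟨r, hr⟩ := hroot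
    by_cases hrab : r ∈ Set.Icc a b
    · exact ⟨r, hrab, hr⟩
    obtain ⟨t, ht⟩ := dvd_iff_isRoot.mpr hr
    refine descend _ t ht (by simp) ?_
    simp only [eval_sub, eval_X, eval_C, Set.mem_Icc, not_and_or, not_le] at hrab ⊢
    rcases hrab with h | h <;> nlinarith
  · push Not at hroot
    have hunit : ¬ IsUnit f := fun hu => by
      obtain ⟨c, -, rfl⟩ := Polynomial.isUnit_iff.mp hu
      simp only [eval_C] at hf
      nlinarith [mul_self_nonneg c]
    obtain ⟨q, hq, t, ht⟩ := WfDvdMonoid.exists_irreducible_factor hunit hf0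
    exact descend q t ht hq.natDegree_pos (eval_mul_eval_pos_of_irreducible hq
      (fun x hx => hroot x (by simp [ht, hx.eq_zero])) a b)

theorem exists_valuation_pow_eq {Γ₀ : Type*} [LinearOrderedCommGroupWithZero Γ₀]
    (v : Valuation R Γ₀) {x : R} (hx : x ≠ 0) {n : ℕ} (hn : n ≠ 0) :
    ∃ y : R, y ≠ 0 ∧ v y ^ n = v x := by
  obtain ⟨y, hy⟩ := exists_eq_pow_of_nonneg (abs_nonneg x) hn
  refine ⟨y, ?_, by rw [← map_pow, ← hy, v.map_abs]⟩
  rintro rfl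
  exact hx (abs_eq_zero.mp (by rw [hy, zero_pow hn]))

end IsRealClosed

theorem ValuationSubring.exists_isRoot_residueField_of_odd_natDegree {K : Type*} [Field K]
    (A : ValuationSubring K) (hK : ∀ f : K[X], Odd f.natDegree → ∃ x, f.IsRoot x)
    {p : (ResidueField A)[X]} (hp : Odd p.natDegree) : ∃ x, p.IsRoot x := by
  have hp0 : p ≠ 0 := by rintro rfl; simp at hp
  have hc : p.leadingCoeff⁻¹ ≠ 0 := inv_ne_zero (leadingCoeff_ne_zero.mpr hp0)
  obtain ⟨q, hq, hqdeg, hqm⟩ := lifts_and_natDegree_eq_and_monic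
    (map_surjective _ residue_surjective (p * C p.leadingCoeff⁻¹))
    (monic_mul_leadingCoeff_inv hp0)
  obtain ⟨x, hx⟩ := hK (q.map (algebraMap A K))
    (by rwa [hqm.natDegree_map, hqdeg, natDegree_mul_C hc])
  obtain ⟨y, rfl⟩ := IsIntegrallyClosed.isIntegral_iff.mp
    (⟨q, hqm, by rwa [IsRoot, eval_map] at hx⟩ : IsIntegral A x)
  have hy : q.IsRoot y := by
    rw [IsRoot, eval_map_algebraMap, aeval_algebraMap_apply, coe_aeval_eq_eval] at hx
    exact (FaithfulSMul.algebraMap_injective A K) (by rw [hx, map_zero])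
  refine ⟨residue A y, ?_⟩
  have := congr_arg (eval (residue A y)) hq
  rw [eval_map, eval₂_at_apply, hy.eq_zero, map_zero, eval_mul, eval_C] at this
  exact (mul_eq_zero.mp this.symm).resolve_right hc

section ConvexValuation

variable {F Γ₀ : Type*} [Field F] [LinearOrder F] [IsStrictOrderedRing F]
  [LinearOrderedCommGroupWithZero Γ₀] {v : Valuation F Γ₀}

def Valuation.IsConvex (v : Valuation F Γ₀) : Prop :=
  ∀ x y : F, 0 ≤ x → x ≤ y → v y ≤ 1 → v x ≤ 1

namespace Valuation.IsConvex

theorem map_le_map_of_abs_le (hv : v.IsConvex) {x y : F} (h : |x| ≤ |y|) : v x ≤ v y := by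
  rcases eq_or_ne y 0 with rfl | hy
  · simp_all
  have hy' : 0 < |y| := abs_pos.mpr hy
  calc v x = v (|x| / |y|) * v y := by
        rw [← map_abs v y, ← map_mul, div_mul_cancel₀ _ hy'.ne', map_abs]
    _ ≤ 1 * v y := mul_le_mul_left (hv _ 1 (by positivity) ((div_le_one hy').mpr h) (by simp)) _
    _ = v y := one_mul _

theorem mul_pos_of_map_sub_lt (hv : v.IsConvex) {x y : F} (h : v (x - y) < v y) :
    0 < x * y := by
  by_contra! hxy
  exact h.not_ge (hv.map_le_map_of_abs_le (sq_le_sq.mp (by nlinarith [sq_nonneg x])))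

theorem isOrderingCone_residueCone (hv : v.IsConvex) :
    IsOrderingCone (ResidueField v.valuationSubring) (residueCone F v) where
  add_mem := by
    rintro _ ⟨a, ha, rfl⟩ _ ⟨b, hb, rfl⟩
    exact ⟨a + b, by push_cast; positivity, map_add _ a b⟩
  mul_mem := by
    rintro _ ⟨a, ha, rfl⟩ _ ⟨b, hb, rfl⟩
    exact ⟨a * b, by push_cast; positivity, map_mul _ a b⟩
  sq_mem x := by
    obtain ⟨a, rfl⟩ := residue_surjective x
    exact ⟨a ^ 2, by push_cast; positivity, map_pow _ a 2⟩
  neg_one_not_mem := by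
    rintro ⟨a, ha, h⟩
    have hm : a + 1 ∈ maximalIdeal v.valuationSubring := by
      rw [← residue_eq_zero_iff, map_add, h, map_one, neg_add_cancel]
    have h1 : v 1 ≤ v ((a + 1 : v.valuationSubring) : F) :=
      hv.map_le_map_of_abs_le (by push_cast; rw [abs_one, abs_of_nonneg (by positivity)]; linarith)
    exact (v.mem_maximalIdeal_iff.mp hm).not_ge (by rwa [map_one] at h1)
  total x := by
    obtain ⟨a, rfl⟩ := residue_surjective x
    rcases le_total 0 (a : F) with h | h
    · exact .inl ⟨a, h, rfl⟩
    · exact .inr ⟨-a, by push_cast; linarith, _root_.map_neg _ a⟩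

theorem isRealClosedCone_residueCone [IsRealClosed F] (hv : v.IsConvex) :
    IsRealClosedCone (ResidueField v.valuationSubring) (residueCone F v) := by
  refine ⟨hv.isOrderingCone_residueCone, ?_, fun p hp =>
    v.valuationSubring.exists_isRoot_residueField_of_odd_natDegree
      (fun f hf => IsRealClosed.exists_isRoot_of_odd_natDegree hf) hp⟩
  rintro _ ⟨a, ha, rfl⟩
  obtain ⟨y, hy⟩ := IsRealClosed.exists_eq_pow_of_nonneg ha two_ne_zero
  have hy1 : v y ≤ 1 := (pow_le_one_iff two_ne_zero).mp (by rw [← map_pow, ← hy]; exact a.2)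
  exact ⟨residue _ ⟨y, hy1⟩, by rw [← map_pow]; congr 1; ext; simp [hy]⟩

/-- By Taylor expansion `f (a + y) - f' a * y = f a + k * y ^ 2` has valuation at most
`v y ^ 2 < v (f' a * y)`, so convexity transfers the sign of `f' a * y` to `f (a + y)`. -/
theorem mul_pos_eval_add (hv : v.IsConvex) {f : v.valuationSubring[X]}
    {a y : v.valuationSubring} (hfa : v (↑(f.eval a) : F) ≤ v (y : F) ^ 2)
    (hu : IsUnit (f.derivative.eval a)) (hy : v (y : F) < 1) (hy0 : y ≠ 0) :
    0 < (↑(f.eval (a + y)) : F) * (↑(f.derivative.eval a * y) : F) := by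
  obtain ⟨k, hk⟩ := binomExpansion f a y
  have hu1 : v (↑(f.derivative.eval a) : F) = 1 :=
    (Valuation.valuationSubring.integers v).isUnit_iff_valuation_eq_one.mp hu
  have hvy0 : v (y : F) ≠ 0 := (map_ne_zero v).mpr (by simpa using hy0)
  apply hv.mul_pos_of_map_sub_lt
  calc v ((↑(f.eval (a + y)) : F) - ↑(f.derivative.eval a * y))
      = v ((↑(f.eval a) : F) + k * y ^ 2) := by rw [hk]; push_cast; ring_nf
    _ ≤ v (y : F) ^ 2 :=
        v.map_add_le hfa (by rw [map_mul, map_pow]; exact mul_le_of_le_one_left' k.2)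
    _ < v (y : F) := by rw [sq]; exact mul_lt_of_lt_one_left (zero_lt_iff.mpr hvy0) hy
    _ = v (↑(f.derivative.eval a * y) : F) := by push_cast; rw [map_mul, hu1, one_mul]

theorem exists_isRoot_sub_mem_maximalIdeal [IsRealClosed F] (hv : v.IsConvex)
    {f : v.valuationSubring[X]} {a y : v.valuationSubring} (hy : 0 < (y : F))
    (hy1 : v (y : F) < 1) (hfa : v (↑(f.eval a) : F) ≤ v (y : F) ^ 2)
    (hu : IsUnit (f.derivative.eval a)) :
    ∃ b : v.valuationSubring, f.IsRoot b ∧ b - a ∈ maximalIdeal v.valuationSubring := by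
  have hy0 : y ≠ 0 := fun h => hy.ne' (congr_arg Subtype.val h)
  have hpos := hv.mul_pos_eval_add hfa hu hy1 hy0
  have hneg := hv.mul_pos_eval_add (y := -y) (by simpa using hfa) hu (by simpa using hy1)
    (neg_ne_zero.mpr hy0)
  rw [mul_neg, NegMemClass.coe_neg, mul_neg] at hneg
  obtain ⟨x, ⟨hx1, hx2⟩, hx⟩ := IsRealClosed.exists_isRoot_of_eval_mul_eval_neg
    (f := f.map (algebraMap _ F)) (a := algebraMap _ F (a + -y)) (b := algebraMap _ F (a + y))
    (by simp only [ValuationSubring.algebraMap_apply]; push_cast; linarith) (by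
      rw [eval_map, eval₂_at_apply, eval_map, eval₂_at_apply]
      simp only [ValuationSubring.algebraMap_apply]
      nlinarith [mul_pos hpos hneg, sq_nonneg ((↑(f.derivative.eval a * y)) : F)])
  simp only [ValuationSubring.algebraMap_apply] at hx1 hx2
  push_cast at hx1 hx2
  have hxa : v (x - a) < 1 := by
    refine (hv.map_le_map_of_abs_le ?_).trans_lt hy1
    rw [abs_of_pos hy]
    exact abs_sub_le_iff.mpr ⟨by linarith, by linarith⟩
  have hxO : v x ≤ 1 := by simpa using v.map_add_le hxa.le a.2
  refine ⟨⟨x, hxO⟩, FaithfulSMul.algebraMap_injective _ F ?_, v.mem_maximalIdeal_iff.mpr hxa⟩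
  rw [map_zero, ← eval₂_at_apply, ← eval_map]
  exact hx

theorem henselianLocalRing_valuationSubring [IsRealClosed F] (hv : v.IsConvex) :
    HenselianLocalRing v.valuationSubring where
  is_henselian f _ a hfa hfu := by
    by_cases hc0 : f.eval a = 0
    · exact ⟨a, hc0, by simp⟩
    obtain ⟨r, hr⟩ := IsRealClosed.exists_eq_pow_of_nonneg (abs_nonneg (↑(f.eval a) : F))
      two_ne_zero
    rw [← sq_abs] at hr
    have hvs : v |r| ^ 2 = v ↑(f.eval a) := by rw [← map_pow, ← hr, map_abs]
    have hs1 : v |r| < 1 := (pow_lt_one_iff two_ne_zero).mp (hvs ▸ v.mem_maximalIdeal_iff.mp hfa)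
    have hs0 : 0 < |r| := abs_pos.mpr fun h => hc0 (by simpa [h] using hr)
    exact hv.exists_isRoot_sub_mem_maximalIdeal (y := ⟨|r|, hs1.le⟩) hs0 hs1 hvs.ge hfu

end Valuation.IsConvex

end ConvexValuation

theorem IsRealClosedLOF.isRealClosed {F : Type*} [Field F] [LinearOrder F]
    [IsStrictOrderedRing F] (hF : IsRealClosedLOF F) : IsRealClosed F :=
  .of_linearOrderedField (fun {x} hx => (hF.1 x hx).imp fun y hy => by rw [← hy, sq])
    (fun {f} hf => hF.2 f hf)

theorem real_closed_convex_valuation_conclusions_general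
    (F : Type) [Field F] [LinearOrder F] [IsStrictOrderedRing F] (hF : IsRealClosedLOF F)
    (Γ₀ : Type) [LinearOrderedCommGroupWithZero Γ₀]
    (v : Valuation F Γ₀)
    (hconv : ∀ x y : F, 0 ≤ x → x ≤ y → v y ≤ 1 → v x ≤ 1) :
    IsRealClosedCone (IsLocalRing.ResidueField v.valuationSubring) (residueCone F v) ∧
      (∀ x : F, x ≠ 0 → ∀ n : ℕ, 0 < n → ∃ y : F, y ≠ 0 ∧ (v y) ^ n = v x) ∧
      HenselianLocalRing v.valuationSubring := by
  have := hF.isRealClosed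
  have hv : v.IsConvex := hconv
  exact ⟨hv.isRealClosedCone_residueCone,
    fun x hx n hn => IsRealClosed.exists_valuation_pow_eq v hx hn.ne',
    hv.henselianLocalRing_valuationSubring⟩

/-- let `F` be a real closed field with its (unique) ordering and `v` a
non-trivial convex valuation on `F`.  Then the residue field with the induced ordering is
real closed, the value group is divisible, and `(F, v)` is henselian. -/
theorem real_closed_convex_valuation_conclusions
    (F : Type) [Field F] [LinearOrder F] [IsStrictOrderedRing F] (hF : IsRealClosedLOF F)
    (Γ₀ : Type) [LinearOrderedCommGroupWithZero Γ₀]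
    (v : Valuation F Γ₀)
    (hnontriv : ∃ x : F, x ≠ 0 ∧ v x ≠ 1)
    (hconv : ∀ x y : F, 0 ≤ x → x ≤ y → v y ≤ 1 → v x ≤ 1) :
    IsRealClosedCone (IsLocalRing.ResidueField v.valuationSubring) (residueCone F v) ∧
      (∀ x : F, x ≠ 0 → ∀ n : ℕ, 0 < n → ∃ y : F, y ≠ 0 ∧ (v y) ^ n = v x) ∧
      HenselianLocalRing v.valuationSubring :=
  real_closed_convex_valuation_conclusions_general F hF Γ₀ v hconv
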